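/- arXiv:2212.04166 — 9 statements merged into one kernel-verified Lean document; each statement's English description precedes it below -/
import Mathlib

section
/- In a connected graph G with at least two vertices, a cut vertex (separation vertex) is not maximally distant from any vertex of G. -/
open SimpleGraph

/-- `y` is maximally distant from `x` in `G`: no neighbor of `y` is farther from `x` than `y`. -/
def MaxDistantFrom {V : Type*} (G : SimpleGraph V) (y x : V) : Prop :=
  ∀ z, G.Adj y z → G.dist z x ≤ G.dist y x

/-- `u` and `v` are mutually maximally distant in `G`. -/
def MutuallyMaxDistant {V : Type*} (G : SimpleGraph V) (u v : V) : Prop :=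
  MaxDistantFrom G u v ∧ MaxDistantFrom G v u

/-- The strong resolving graph of `G`: edges are the mutually maximally distant pairs. -/
def srGraph {V : Type*} (G : SimpleGraph V) : SimpleGraph V where
  Adj u v := u ≠ v ∧ MutuallyMaxDistant G u v
  symm := ⟨fun u v h => ⟨h.1.symm, h.2.2, h.2.1⟩⟩
  loopless := ⟨fun u h => h.1 rfl⟩

/-- `w` strongly resolves `u` and `v`: `v` lies on a shortest `w`–`u` path, or
`u` lies on a shortest `w`–`v` path. -/
def StronglyResolves {V : Type*} (G : SimpleGraph V) (w u v : V) : Prop :=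
  G.dist w v + G.dist v u = G.dist w u ∨ G.dist w u + G.dist u v = G.dist w v

/-- `R` is a strong resolving set for `G`. -/
def StrongResolvingSet {V : Type*} (G : SimpleGraph V) (R : Set V) : Prop :=
  ∀ u v : V, u ≠ v → ∃ w ∈ R, StronglyResolves G w u v

/-! If `s` is maximally distant from `w ≠ s`, then from any vertex `v ≠ s` one can walk to `w`
along a geodesic: each step moves to a neighbour strictly closer to `w`, and such a neighbour is
never `s`, since otherwise `v` would be a neighbour of `s` farther from `w` than `s`. Hence
`G - s` is connected. If `w = s`, then `s` has no neighbour at all, so `s` is the only vertex. -/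

namespace SimpleGraph

variable {V : Type*} {G : SimpleGraph V}

theorem Reachable.exists_adj_dist_lt {v w : V} (h : G.Reachable v w) (hne : v ≠ w) :
    ∃ z, G.Adj v z ∧ G.dist z w < G.dist v w := by
  obtain ⟨p, hp⟩ := h.exists_walk_length_eq_dist
  have hnil : ¬ p.Nil := Walk.not_nil_of_ne hne
  refine ⟨p.snd, p.adj_snd hnil, ?_⟩
  calc G.dist p.snd w ≤ p.tail.length := dist_le p.tail
    _ < p.length := by rw [← p.length_tail_add_one hnil]; omega
    _ = G.dist v w := hp

theorem not_maxDistantFrom_self {s t : V} (h : G.Reachable s t) (hne : s ≠ t) :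
    ¬ MaxDistantFrom G s s := by
  intro hmax
  obtain ⟨z, hadj, -⟩ := h.exists_adj_dist_lt hne
  have hz : G.dist z s = 0 := Nat.le_zero.mp (dist_self (G := G) ▸ hmax z hadj)
  exact hadj.ne ((hadj.symm.reachable.dist_eq_zero_iff).mp hz).symm

theorem MaxDistantFrom.reachable_induce_ne {s w : V} (hG : G.Preconnected)
    (hmax : MaxDistantFrom G s w) (hw : w ≠ s) (v : V) (hv : v ≠ s) :
    (G.induce {v | v ≠ s}).Reachable ⟨v, hv⟩ ⟨w, hw⟩ := by
  induction hd : G.dist v w using Nat.strong_induction_on generalizing v with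
  | _ n ih =>
    by_cases hvw : v = w
    · subst hvw; rfl
    obtain ⟨z, hadj, hlt⟩ := (hG v w).exists_adj_dist_lt hvw
    have hzs : z ≠ s := by
      rintro rfl
      exact absurd (hmax v hadj.symm) (by omega)
    have hadj' : (G.induce {v | v ≠ s}).Adj ⟨v, hv⟩ ⟨z, hzs⟩ := hadj
    exact hadj'.reachable.trans (ih _ (hd ▸ hlt) z hzs rfl)

theorem MaxDistantFrom.preconnected_induce_ne {s w : V} (hG : G.Preconnected)
    (hmax : MaxDistantFrom G s w) (hw : w ≠ s) : (G.induce {v | v ≠ s}).Preconnected :=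
  fun a b =>
    (hmax.reachable_induce_ne hG hw a a.2).trans (hmax.reachable_induce_ne hG hw b b.2).symm

end SimpleGraph

theorem cut_vertex_not_maxDistant_general {V : Type*} (G : SimpleGraph V)
    (hG : G.Connected) (s : V)
    (hs : ¬ (G.induce {v | v ≠ s}).Preconnected) :
    ∀ w : V, ¬ MaxDistantFrom G s w := by
  intro w hmax
  by_cases hws : w = s
  · subst hws
    obtain ⟨⟨t, ht⟩, -⟩ : ∃ a b : {v | v ≠ w}, ¬ (G.induce {v | v ≠ w}).Reachable a b := by
      simpa [Preconnected] using hs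
    exact not_maxDistantFrom_self (hG w t) (Ne.symm ht) hmax
  · exact hs (hmax.preconnected_induce_ne hG.preconnected hws)

/-- A cut vertex of a connected graph with at least two vertices is not maximally
distant from any vertex. -/
theorem cut_vertex_not_maxDistant {V : Type*} [Fintype V] (G : SimpleGraph V)
    (hG : G.Connected) (hV : Nontrivial V) (s : V)
    (hs : ¬ (G.induce {v | v ≠ s}).Preconnected) :
    ∀ w : V, ¬ MaxDistantFrom G s w :=
  cut_vertex_not_maxDistant_general G hG s hs
end

section
/- A vertex set R ⊆ V is a strong resolving set for a connected graph G if and only if R is a vertex cover of the strong resolving graph G_SR of G. -/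
open SimpleGraph

/-!
A vertex `w` strongly resolving a mutually maximally distant pair `a, b` must be `a` or `b`:
otherwise one of them, say `b`, lies on a shortest `w`–`a` path and has a neighbor closer to
`w`, which would then be farther from `a` than `b` is. Conversely, given `u ≠ v`, extend a
shortest `v`–`u` path beyond `u` as far as possible, to a vertex `u'` maximally distant from `v`,
and then a shortest `u'`–`v` path beyond `v`, to `v'` maximally distant from `u'`. The pair
`u', v'` is mutually maximally distant and `u, v` lie in this order on a shortest `u'`–`v'`
path, so each of `u'` and `v'` strongly resolves `u, v`.
-/

section

variable {V : Type*} {G : SimpleGraph V}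

lemma SimpleGraph.Connected.exists_adj_dist_add_one_le (hG : G.Connected) {w v : V}
    (hwv : w ≠ v) : ∃ z, G.Adj v z ∧ G.dist w z + 1 ≤ G.dist w v := by
  obtain ⟨p, hp⟩ := hG.exists_walk_length_eq_dist v w
  cases p with
  | nil => exact absurd (hG.dist_eq_zero_iff.mp hp.symm).symm hwv
  | @cons _ z _ hvz q =>
    refine ⟨z, hvz, ?_⟩
    have hq : G.dist z w ≤ q.length := dist_le q
    rw [Walk.length_cons] at hp
    rw [dist_comm, dist_comm (u := w)]
    omega

lemma MaxDistantFrom.eq_of_dist_add_dist_eq (hG : G.Connected) {u v w : V}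
    (hv : MaxDistantFrom G v u) (h : G.dist w v + G.dist v u = G.dist w u) : w = v := by
  by_contra hwv
  obtain ⟨z, hvz, hz⟩ := hG.exists_adj_dist_add_one_le hwv
  have hzu := hv z hvz
  have : G.dist w u ≤ G.dist w z + G.dist z u := hG.dist_triangle
  omega

lemma MutuallyMaxDistant.eq_or_eq_of_stronglyResolves (hG : G.Connected) {a b w : V}
    (hab : MutuallyMaxDistant G a b) (hw : StronglyResolves G w a b) : w = a ∨ w = b := by
  rcases hw with h | h
  · exact .inr (hab.2.eq_of_dist_add_dist_eq hG h)
  · exact .inl (hab.1.eq_of_dist_add_dist_eq hG h)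

lemma MaxDistantFrom.of_dist_eq_add (hG : G.Connected) {x y z : V}
    (hy : MaxDistantFrom G y x) (h : G.dist y z = G.dist y x + G.dist x z) :
    MaxDistantFrom G y z := by
  intro t hyt
  have := hy t hyt
  have : G.dist t z ≤ G.dist t x + G.dist x z := hG.dist_triangle
  omega

lemma SimpleGraph.Connected.exists_maxDistantFrom_dist_eq_add [Finite V] (hG : G.Connected)
    (u v : V) : ∃ u', MaxDistantFrom G u' v ∧ G.dist u' v = G.dist u' u + G.dist u v := by
  let S : Set V := {x | G.dist x v = G.dist x u + G.dist u v}
  have huS : u ∈ S := by simp [S]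
  obtain ⟨u', hu'S, hmax⟩ := S.exists_max_image (G.dist · v) S.toFinite ⟨u, huS⟩
  refine ⟨u', fun z hu'z => ?_, hu'S⟩
  by_contra! hlt
  replace hu'S : G.dist u' v = G.dist u' u + G.dist u v := hu'S
  have hz1 : G.dist z u' ≤ 1 := by simpa using dist_le hu'z.symm.toWalk
  have : G.dist z v ≤ G.dist z u + G.dist u v := hG.dist_triangle
  have : G.dist z u ≤ G.dist z u' + G.dist u' u := hG.dist_triangle
  have : G.dist z v ≤ G.dist z u' + G.dist u' v := hG.dist_triangle
  have hzS : z ∈ S := show G.dist z v = G.dist z u + G.dist u v by omega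
  exact (hmax z hzS).not_gt hlt

lemma SimpleGraph.Connected.exists_srGraph_adj_stronglyResolves [Finite V] (hG : G.Connected)
    {u v : V} (huv : u ≠ v) :
    ∃ a b, (srGraph G).Adj a b ∧ StronglyResolves G a u v ∧ StronglyResolves G b u v := by
  obtain ⟨a, ha, hau⟩ := hG.exists_maxDistantFrom_dist_eq_add u v
  obtain ⟨b, hb, hbv⟩ := hG.exists_maxDistantFrom_dist_eq_add v a
  have hva : G.dist v a = G.dist v u + G.dist u a := by
    rw [dist_comm, hau, dist_comm (u := a), dist_comm (u := u) (v := v), add_comm]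
  have hab : G.dist a b = G.dist a v + G.dist v b := by
    rw [dist_comm, hbv, dist_comm (u := b), dist_comm (u := v) (v := a), add_comm]
  have hbu : G.dist b v + G.dist v u = G.dist b u := by
    have : G.dist b u ≤ G.dist b v + G.dist v u := hG.dist_triangle
    have : G.dist b a ≤ G.dist b u + G.dist u a := hG.dist_triangle
    omega
  have hne : a ≠ b := by
    rintro rfl
    have : G.dist u v = 0 := by rw [dist_self] at hbv; omega
    exact huv (hG.dist_eq_zero_iff.mp this)
  exact ⟨a, b, ⟨hne, ha.of_dist_eq_add hG hab, hb⟩, .inr hau.symm, .inl hbu⟩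

end

/-- `R` is a strong resolving set for a connected graph `G` iff `R` is a vertex cover
of the strong resolving graph of `G`. -/
theorem strongResolvingSet_iff_vertexCover {V : Type*} [Fintype V] (G : SimpleGraph V)
    (hG : G.Connected) (R : Set V) :
    StrongResolvingSet G R ↔ ∀ a b : V, (srGraph G).Adj a b → a ∈ R ∨ b ∈ R := by
  constructor
  · intro hR a b hab
    obtain ⟨w, hwR, hw⟩ := hR a b hab.1
    rcases hab.2.eq_or_eq_of_stronglyResolves hG hw with rfl | rfl
    exacts [.inl hwR, .inr hwR]
  · intro hcover u v huv
    obtain ⟨a, b, hab, ha, hb⟩ := hG.exists_srGraph_adj_stronglyResolves huv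
    rcases hcover a b hab with haR | hbR
    exacts [⟨a, haR, ha⟩, ⟨b, hbR, hb⟩]
end

section
/- If u and v are mutually maximally distant in a connected graph G, then every strong resolving set of G contains u or v. -/
open SimpleGraph

namespace SimpleGraph

variable {V : Type*} {G : SimpleGraph V} {v w : V}

lemma Reachable.exists_adj_dist_add_one_eq (h : G.Reachable v w) (hne : v ≠ w) :
    ∃ z, G.Adj v z ∧ G.dist z w + 1 = G.dist v w := by
  obtain ⟨p, hp⟩ := h.exists_walk_length_eq_dist
  cases p with
  | nil => exact absurd rfl hne
  | cons hadj q =>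
    refine ⟨_, hadj, le_antisymm ?_ ?_⟩
    · rw [← hp, Walk.length_cons]
      exact Nat.add_le_add_right (dist_le q) 1
    · obtain ⟨q', hq'⟩ := q.reachable.exists_walk_length_eq_dist
      simpa [hq'] using dist_le (q'.cons hadj)

end SimpleGraph

section

variable {V : Type*} {G : SimpleGraph V} {u v w : V}

/-- Stepping from `v` one edge towards `w` shortens the distance to `w` without lengthening
the distance to `u`. -/
lemma MaxDistantFrom.dist_lt_dist_add_dist (hG : G.Connected) (hmax : MaxDistantFrom G v u)
    (hwv : w ≠ v) : G.dist w u < G.dist w v + G.dist v u := by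
  obtain ⟨z, hvz, hz⟩ := (hG v w).exists_adj_dist_add_one_eq hwv.symm
  rw [dist_comm, dist_comm (u := v)] at hz
  calc G.dist w u ≤ G.dist w z + G.dist z u := hG.dist_triangle
    _ ≤ G.dist w z + G.dist v u := Nat.add_le_add_left (hmax z hvz) _
    _ < G.dist w v + G.dist v u := by omega

lemma MutuallyMaxDistant.not_stronglyResolves (hG : G.Connected) (h : MutuallyMaxDistant G u v)
    (hwu : w ≠ u) (hwv : w ≠ v) : ¬StronglyResolves G w u v := by
  rintro (hvu | huv)
  · exact (h.2.dist_lt_dist_add_dist hG hwv).ne' hvu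
  · exact (h.1.dist_lt_dist_add_dist hG hwu).ne' huv

end

theorem mem_of_mutuallyMaxDistant_general {V : Type*} (G : SimpleGraph V)
    (hG : G.Connected) (u v : V) (huv : u ≠ v) (h : MutuallyMaxDistant G u v)
    (R : Set V) (hR : StrongResolvingSet G R) : u ∈ R ∨ v ∈ R := by
  obtain ⟨w, hwR, hres⟩ := hR u v huv
  by_cases hwu : w = u
  · exact .inl (hwu ▸ hwR)
  by_cases hwv : w = v
  · exact .inr (hwv ▸ hwR)
  exact absurd hres (h.not_stronglyResolves hG hwu hwv)

/-- If `u` and `v` are mutually maximally distant in a connected graph `G`, then every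
strong resolving set of `G` contains `u` or `v`. -/
theorem mem_of_mutuallyMaxDistant {V : Type*} [Fintype V] (G : SimpleGraph V)
    (hG : G.Connected) (u v : V) (huv : u ≠ v) (h : MutuallyMaxDistant G u v)
    (R : Set V) (hR : StrongResolvingSet G R) : u ∈ R ∨ v ∈ R :=
  mem_of_mutuallyMaxDistant_general G hG u v huv h R hR
end

section
/- Let J be obtained by gluing connected graphs G_1,...,G_k (each with at least two vertices) to a connected graph H (with at least two vertices) by identifying vertex u_i of G_i with vertex v_i of H. Then each identified vertex v_i has no incident edges in the strong resolving graph of J. -/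
open SimpleGraph

/-- The graph obtained from the disjoint union of the graphs `G i` and `H` by identifying,
for each `i`, the vertex `u i` of `G i` with the vertex `v i` of `H`.  The vertices of
`G i` other than `u i` keep their identity (as `Sum.inl ⟨i, x⟩`), the vertices of `H`
keep their identity (as `Sum.inr w`), and `u i` is identified with `v i`. -/
def glue {k : ℕ} {α : Fin k → Type*} {β : Type*}
    (G : ∀ i, SimpleGraph (α i)) (H : SimpleGraph β) (u : ∀ i, α i) (v : Fin k → β) :
    SimpleGraph ((Σ i, {x : α i // x ≠ u i}) ⊕ β) where
  Adj a b :=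
    (∃ (i : Fin k) (x y : {z : α i // z ≠ u i}), (G i).Adj x.1 y.1 ∧
        a = Sum.inl ⟨i, x⟩ ∧ b = Sum.inl ⟨i, y⟩) ∨
    (∃ (i : Fin k) (x : {z : α i // z ≠ u i}), (G i).Adj x.1 (u i) ∧
        ((a = Sum.inl ⟨i, x⟩ ∧ b = Sum.inr (v i)) ∨
         (b = Sum.inl ⟨i, x⟩ ∧ a = Sum.inr (v i)))) ∨
    (∃ w w' : β, H.Adj w w' ∧ a = Sum.inr w ∧ b = Sum.inr w')
  symm := by
    refine ⟨?_⟩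
    rintro a b (⟨i, x, y, hxy, ha, hb⟩ | ⟨i, x, hx, h | h⟩ | ⟨w, w', hww, ha, hb⟩)
    · exact Or.inl ⟨i, y, x, hxy.symm, hb, ha⟩
    · exact Or.inr (Or.inl ⟨i, x, hx, Or.inr h⟩)
    · exact Or.inr (Or.inl ⟨i, x, hx, Or.inl h⟩)
    · exact Or.inr (Or.inr ⟨w', w, hww.symm, hb, ha⟩)
  loopless := by
    refine ⟨?_⟩
    rintro a (⟨i, x, y, hxy, ha, hb⟩ | ⟨i, x, _, ⟨ha, hb⟩ | ⟨ha, hb⟩⟩ | ⟨w, w', hww, ha, hb⟩)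
    · subst ha
      injection hb with h
      injection h with h1 h2
      subst h2
      exact (G i).loopless.irrefl _ hxy
    · subst ha; simp at hb
    · subst ha; simp at hb
    · subst ha
      injection hb with h
      subst h
      exact H.loopless.irrefl _ hww

/-! Each `v i` is a cut vertex of the glued graph. Given `b`, choose a neighbour `z` of `v i` on
the other side of `v i` from `b`: in `H` if `b` lies in the branch of `G i`, in `G i` otherwise
(both exist because the graphs are connected with at least two vertices). Every `z`–`b` walk
passes through `v i`, so `z` is strictly farther from `b` than `v i`, and `v i` is not maximally
distant from `b`. -/

namespace SimpleGraph

variable {V : Type*} {J : SimpleGraph V}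

lemma dist_lt_of_forall_mem_support {z c b : V} (hr : J.Reachable z b) (hzc : z ≠ c)
    (hsep : ∀ p : J.Walk z b, c ∈ p.support) : J.dist c b < J.dist z b := by
  classical
  obtain ⟨p, hp⟩ := hr.exists_walk_length_eq_dist
  have hc := hsep p
  have h_drop : J.dist c b ≤ (p.dropUntil c hc).length := J.dist_le _
  have h_take : (p.takeUntil c hc).length ≠ 0 := fun h => hzc (Walk.eq_of_length_eq_zero h)
  have h_split : (p.takeUntil c hc).length + (p.dropUntil c hc).length = p.length := by
    rw [← Walk.length_append, Walk.take_spec]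
  omega

lemma not_maxDistantFrom_of_adj {c z b : V} (hcz : J.Adj c z) (hr : J.Reachable c b)
    (hsep : ∀ p : J.Walk z b, c ∈ p.support) : ¬ MaxDistantFrom J c b := fun hmax =>
  (hmax z hcz).not_gt <|
    dist_lt_of_forall_mem_support (hcz.symm.reachable.trans hr) hcz.ne' hsep

end SimpleGraph

section Glue

variable {k : ℕ} {α : Fin k → Type*} {β : Type*}
  {G : ∀ i, SimpleGraph (α i)} {H : SimpleGraph β} {u : ∀ i, α i} {v : Fin k → β}

def InGlueBranch (i : Fin k) : (Σ i, {x : α i // x ≠ u i}) ⊕ β → Prop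
  | Sum.inl a => a.1 = i
  | Sum.inr _ => False

lemma glue_adj_inl_inl {i : Fin k} {x y : {z : α i // z ≠ u i}} (h : (G i).Adj x y) :
    (glue G H u v).Adj (Sum.inl ⟨i, x⟩) (Sum.inl ⟨i, y⟩) :=
  Or.inl ⟨i, x, y, h, rfl, rfl⟩

lemma glue_adj_inl_inr {i : Fin k} {x : {z : α i // z ≠ u i}} (h : (G i).Adj x (u i)) :
    (glue G H u v).Adj (Sum.inl ⟨i, x⟩) (Sum.inr (v i)) :=
  Or.inr (Or.inl ⟨i, x, h, Or.inl ⟨rfl, rfl⟩⟩)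

lemma glue_adj_inr_inr {w w' : β} (h : H.Adj w w') :
    (glue G H u v).Adj (Sum.inr w) (Sum.inr w') :=
  Or.inr (Or.inr ⟨w, w', h, rfl, rfl⟩)

variable (G H u v) in
def glueHomH : H →g glue G H u v where
  toFun := Sum.inr
  map_rel' := glue_adj_inr_inr

variable (G H u v) in
open Classical in
noncomputable def glueHomG (j : Fin k) : G j →g glue G H u v where
  toFun x := if h : x = u j then Sum.inr (v j) else Sum.inl ⟨j, ⟨x, h⟩⟩
  map_rel' {a b} hab := by
    by_cases ha : a = u j <;> by_cases hb : b = u j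
    · exact absurd (ha.trans hb.symm) hab.ne
    · simp only [dif_pos ha, dif_neg hb]
      subst ha
      exact (glue_adj_inl_inr hab.symm).symm
    · simp only [dif_neg ha, dif_pos hb]
      subst hb
      exact glue_adj_inl_inr hab
    · simp only [dif_neg ha, dif_neg hb]
      exact glue_adj_inl_inl hab

lemma glue_connected (hGc : ∀ i, (G i).Connected) (hHc : H.Connected) :
    (glue G H u v).Connected := by
  obtain ⟨w₀⟩ := hHc.nonempty
  have reach_H (w : β) : (glue G H u v).Reachable (Sum.inr w) (Sum.inr w₀) :=
    (hHc.preconnected w w₀).map (glueHomH G H u v)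
  have reach (a) : (glue G H u v).Reachable a (Sum.inr w₀) := by
    rcases a with ⟨j, x⟩ | w
    · have hx : glueHomG G H u v j x.1 = Sum.inl ⟨j, x⟩ := dif_neg x.2
      have hu : glueHomG G H u v j (u j) = Sum.inr (v j) := dif_pos rfl
      have := ((hGc j).preconnected x.1 (u j)).map (glueHomG G H u v j)
      rw [hx, hu] at this
      exact this.trans (reach_H (v j))
    · exact reach_H w
  have : Nonempty ((Σ i, {x : α i // x ≠ u i}) ⊕ β) := ⟨Sum.inr w₀⟩
  exact ⟨fun a b => (reach a).trans (reach b).symm⟩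

lemma glue_adj_inGlueBranch {i : Fin k} {a b : (Σ i, {x : α i // x ≠ u i}) ⊕ β}
    (hab : (glue G H u v).Adj a b) (ha : InGlueBranch i a) :
    InGlueBranch i b ∨ b = Sum.inr (v i) := by
  rcases hab with ⟨j, x, y, -, rfl, rfl⟩ | ⟨j, x, -, ⟨rfl, rfl⟩ | ⟨-, rfl⟩⟩ | ⟨w, w', -, rfl, -⟩
  · exact Or.inl ha
  · exact Or.inr (congrArg (Sum.inr ∘ v) ha)
  · exact ha.elim
  · exact ha.elim

lemma glue_mem_support_of_inGlueBranch (i : Fin k) {a b : (Σ i, {x : α i // x ≠ u i}) ⊕ β}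
    (p : (glue G H u v).Walk a b) (ha : InGlueBranch i a) (hb : ¬ InGlueBranch i b) :
    Sum.inr (v i) ∈ p.support := by
  induction p with
  | nil => exact (hb ha).elim
  | cons hadj p ih =>
    rw [Walk.support_cons, List.mem_cons]
    rcases glue_adj_inGlueBranch hadj ha with ha' | rfl
    · exact Or.inr (ih ha' hb)
    · exact Or.inr p.start_mem_support

lemma glue_mem_support_of_not_iff (i : Fin k) {a b : (Σ i, {x : α i // x ≠ u i}) ⊕ β}
    (p : (glue G H u v).Walk a b) (hab : ¬ (InGlueBranch i a ↔ InGlueBranch i b)) :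
    Sum.inr (v i) ∈ p.support := by
  by_cases ha : InGlueBranch i a
  · exact glue_mem_support_of_inGlueBranch i p ha (fun hb => hab (iff_of_true ha hb))
  · have hb : InGlueBranch i b := by tauto
    simpa using glue_mem_support_of_inGlueBranch i p.reverse hb ha

lemma glue_exists_adj_not_iff {i : Fin k} [Nontrivial (α i)] [Nontrivial β]
    (hG : (G i).Preconnected) (hH : H.Preconnected) (b : (Σ i, {x : α i // x ≠ u i}) ⊕ β) :
    ∃ z, (glue G H u v).Adj (Sum.inr (v i)) z ∧ ¬ (InGlueBranch i z ↔ InGlueBranch i b) := by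
  by_cases hb : InGlueBranch i b
  · obtain ⟨w, hw⟩ := hH.exists_adj_of_nontrivial (v i)
    exact ⟨Sum.inr w, glue_adj_inr_inr hw, by simpa [InGlueBranch] using hb⟩
  · obtain ⟨y, hy⟩ := hG.exists_adj_of_nontrivial (u i)
    exact ⟨Sum.inl ⟨i, ⟨y, hy.ne'⟩⟩, (glue_adj_inl_inr hy.symm).symm,
      by simpa [InGlueBranch] using hb⟩

end Glue

/-- In the glued graph `J`, each identified vertex `v i` has no incident edges in the
strong resolving graph of `J`. -/
theorem glue_sep_vertex_isolated_in_sr {k : ℕ} {α : Fin k → Type*} {β : Type*}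
    (G : ∀ i, SimpleGraph (α i)) (H : SimpleGraph β)
    (u : ∀ i, α i) (v : Fin k → β)
    (hGc : ∀ i, (G i).Connected) (hHc : H.Connected)
    (hGn : ∀ i, Nontrivial (α i)) (hHn : Nontrivial β) :
    ∀ (i : Fin k) (b : (Σ i, {x : α i // x ≠ u i}) ⊕ β),
      ¬ (srGraph (glue G H u v)).Adj (Sum.inr (v i)) b := by
  rintro i b ⟨-, hmax, -⟩
  obtain ⟨z, hz, hside⟩ := glue_exists_adj_not_iff (hGc i).preconnected hHc.preconnected b
  exact not_maxDistantFrom_of_adj hz ((glue_connected hGc hHc).preconnected _ _)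
    (fun p => glue_mem_support_of_not_iff i p hside) hmax
end

section
/- With the gluing construction J, if u'_i ∈ V(G_i) \ {u_i} is maximally distant from u_i in G_i, then u'_i is maximally distant in J from every vertex v' of J lying outside G_i. -/
open SimpleGraph

/-! `v i` is a cut vertex of the glued graph `J`: a walk from `x` to a vertex `b` outside `G i`
consists of a walk of `G i` from `x` to `u i` followed by a walk of `J` from `v i` to `b`, so
`d_J(x, b) ≥ d_{G i}(x, u i) + d_J(v i, b)`. A neighbour `y` of `x` inside `G i` has
`d_J(y, b) ≤ d_{G i}(y, u i) + d_J(v i, b)`, and `d_{G i}(y, u i) ≤ d_{G i}(x, u i)` by hypothesis;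
the neighbour `v i` is closer still. When `b` is not reachable from `x`, Mathlib's `dist` is `0`
for `x` and all its neighbours alike. -/

theorem SimpleGraph.Hom.dist_map_le {V W : Type*} {G : SimpleGraph V} {G' : SimpleGraph W}
    (f : G →g G') {a b : V} (h : G.Reachable a b) : G'.dist (f a) (f b) ≤ G.dist a b := by
  obtain ⟨p, hp⟩ := h.exists_walk_length_eq_dist
  simpa [hp] using G'.dist_le (p.map f)

section Glue

variable {k : ℕ} {α : Fin k → Type*} {β : Type*}
  (G : ∀ i, SimpleGraph (α i)) (H : SimpleGraph β) (u : ∀ i, α i) (v : Fin k → β)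

theorem glue_adj_inl_iff {i : Fin k} {y : {z : α i // z ≠ u i}}
    {c : (Σ i, {x : α i // x ≠ u i}) ⊕ β} :
    (glue G H u v).Adj (Sum.inl ⟨i, y⟩) c ↔
      (∃ y', (G i).Adj y.1 y'.1 ∧ c = Sum.inl ⟨i, y'⟩) ∨
        ((G i).Adj y.1 (u i) ∧ c = Sum.inr (v i)) := by
  constructor
  · rintro (⟨j, x, y', hxy, ha, rfl⟩ | ⟨j, x, hx, ⟨ha, rfl⟩ | ⟨-, ha⟩⟩ | ⟨_, _, _, ha, _⟩)
    · obtain ⟨rfl, ⟨⟩⟩ := Sigma.mk.inj_iff.mp (Sum.inl_injective ha)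
      exact Or.inl ⟨y', hxy, rfl⟩
    · obtain ⟨rfl, ⟨⟩⟩ := Sigma.mk.inj_iff.mp (Sum.inl_injective ha)
      exact Or.inr ⟨hx, rfl⟩
    · cases ha
    · cases ha
  · rintro (⟨y', hyy', rfl⟩ | ⟨hy, rfl⟩)
    · exact Or.inl ⟨i, y, y', hyy', rfl, rfl⟩
    · exact Or.inr (Or.inl ⟨i, y, hy, Or.inl ⟨rfl, rfl⟩⟩)

open Classical in
noncomputable def glueHom (i : Fin k) : G i →g glue G H u v where
  toFun z := if h : z = u i then Sum.inr (v i) else Sum.inl ⟨i, ⟨z, h⟩⟩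
  map_rel' := by
    intro a b hab
    by_cases ha : a = u i
    · subst ha
      have hb : b ≠ u i := hab.ne.symm
      rw [dif_pos rfl, dif_neg hb]
      exact ((glue_adj_inl_iff G H u v (y := ⟨b, hb⟩)).mpr (Or.inr ⟨hab.symm, rfl⟩)).symm
    · rw [dif_neg ha]
      by_cases hb : b = u i
      · subst hb
        rw [dif_pos rfl]
        exact (glue_adj_inl_iff G H u v).mpr (Or.inr ⟨hab, rfl⟩)
      · rw [dif_neg hb]
        exact (glue_adj_inl_iff G H u v).mpr (Or.inl ⟨⟨b, hb⟩, hab, rfl⟩)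

theorem glueHom_apply_of_ne (i : Fin k) (y : {z : α i // z ≠ u i}) :
    glueHom G H u v i y.1 = Sum.inl ⟨i, y⟩ :=
  dif_neg y.2

theorem glueHom_apply_self (i : Fin k) : glueHom G H u v i (u i) = Sum.inr (v i) :=
  dif_pos rfl

theorem glue_dist_inl_inr_le {i : Fin k} {y : {z : α i // z ≠ u i}}
    (h : (G i).Reachable y.1 (u i)) :
    (glue G H u v).dist (Sum.inl ⟨i, y⟩) (Sum.inr (v i)) ≤ (G i).dist y.1 (u i) := by
  simpa [glueHom_apply_of_ne, glueHom_apply_self] using (glueHom G H u v i).dist_map_le h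

theorem glue_reachable_inl_inr {i : Fin k} {y : {z : α i // z ≠ u i}}
    (h : (G i).Reachable y.1 (u i)) :
    (glue G H u v).Reachable (Sum.inl ⟨i, y⟩) (Sum.inr (v i)) := by
  simpa [glueHom_apply_of_ne, glueHom_apply_self] using h.map (glueHom G H u v i)

theorem exists_walk_split_of_walk_inl {i : Fin k} {a b : (Σ i, {x : α i // x ≠ u i}) ⊕ β}
    (W : (glue G H u v).Walk a b) (hb : ∀ y : {z : α i // z ≠ u i}, b ≠ Sum.inl ⟨i, y⟩)
    (y : {z : α i // z ≠ u i}) (ha : a = Sum.inl ⟨i, y⟩) :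
    ∃ (p : (G i).Walk y.1 (u i)) (q : (glue G H u v).Walk (Sum.inr (v i)) b),
      p.length + q.length = W.length := by
  induction W generalizing y with
  | nil => exact absurd ha (hb y)
  | cons hac W ih =>
    subst ha
    rcases (glue_adj_inl_iff G H u v).mp hac with ⟨y', hyy', rfl⟩ | ⟨hy, rfl⟩
    · obtain ⟨p, q, hpq⟩ := ih hb y' rfl
      exact ⟨.cons hyy' p, q, by simp only [Walk.length_cons]; omega⟩
    · exact ⟨.cons hy .nil, W, by simp only [Walk.length_cons, Walk.length_nil]; omega⟩

end Glue

theorem glue_maxDistant_of_maxDistant_from_u_general {k : ℕ} {α : Fin k → Type*} {β : Type*}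
    (G : ∀ i, SimpleGraph (α i)) (H : SimpleGraph β)
    (u : ∀ i, α i) (v : Fin k → β)
    (i : Fin k) (x : {z : α i // z ≠ u i}) (hx : MaxDistantFrom (G i) x.1 (u i)) :
    ∀ b : (Σ i, {x : α i // x ≠ u i}) ⊕ β,
      (∀ y : {z : α i // z ≠ u i}, b ≠ Sum.inl ⟨i, y⟩) →
      MaxDistantFrom (glue G H u v) (Sum.inl ⟨i, x⟩) b := by
  intro b hb z hxz
  set J := glue G H u v
  by_cases hreach : J.Reachable (Sum.inl ⟨i, x⟩) b
  swap
  · have : ¬J.Reachable z b := fun h => hreach (hxz.reachable.trans h)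
    simp [dist_eq_zero_of_not_reachable this]
  obtain ⟨W, hW⟩ := hreach.exists_walk_length_eq_dist
  obtain ⟨p, q, hpq⟩ := exists_walk_split_of_walk_inl G H u v W hb x rfl
  have hlower : (G i).dist x.1 (u i) + J.dist (Sum.inr (v i)) b ≤ J.dist (Sum.inl ⟨i, x⟩) b :=
    hW ▸ hpq ▸ add_le_add (dist_le p) (dist_le q)
  rcases (glue_adj_inl_iff G H u v).mp hxz with ⟨y, hxy, rfl⟩ | ⟨-, rfl⟩
  · have hy : (G i).Reachable y.1 (u i) := hxy.symm.reachable.trans p.reachable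
    calc J.dist (Sum.inl ⟨i, y⟩) b
        ≤ J.dist (Sum.inl ⟨i, y⟩) (Sum.inr (v i)) + J.dist (Sum.inr (v i)) b :=
          (glue_reachable_inl_inr G H u v hy).dist_triangle_left b
      _ ≤ (G i).dist y.1 (u i) + J.dist (Sum.inr (v i)) b := by
          gcongr; exact glue_dist_inl_inr_le G H u v hy
      _ ≤ (G i).dist x.1 (u i) + J.dist (Sum.inr (v i)) b := by gcongr; exact hx _ hxy
      _ ≤ _ := hlower
  · exact le_of_add_le_right hlower

/-- If `u' ∈ V(G i) \ {u i}` is maximally distant from `u i` in `G i`, then in the glued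
graph `J`, `u'` is maximally distant from every vertex lying outside `G i`. -/
theorem glue_maxDistant_of_maxDistant_from_u {k : ℕ} {α : Fin k → Type*} {β : Type*}
    (G : ∀ i, SimpleGraph (α i)) (H : SimpleGraph β)
    (u : ∀ i, α i) (v : Fin k → β)
    (hGc : ∀ i, (G i).Connected) (hHc : H.Connected)
    (hGn : ∀ i, Nontrivial (α i)) (hHn : Nontrivial β)
    (i : Fin k) (x : {z : α i // z ≠ u i}) (hx : MaxDistantFrom (G i) x.1 (u i)) :
    ∀ b : (Σ i, {x : α i // x ≠ u i}) ⊕ β,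
      (∀ y : {z : α i // z ≠ u i}, b ≠ Sum.inl ⟨i, y⟩) →
      MaxDistantFrom (glue G H u v) (Sum.inl ⟨i, x⟩) b :=
  glue_maxDistant_of_maxDistant_from_u_general G H u v i x hx
end

section
/- Let G be the n×m grid graph with n,m ≥ 2. If x is a corner vertex x_{i,j} with i∈{1,n}, j∈{1,m}, then the unique vertex maximally distant from x is the opposite corner x_{n+1−i, m+1−j}. -/
open SimpleGraph

/-- The `n × m` grid graph: vertices `(i, j)` with `0 ≤ i < n`, `0 ≤ j < m`,
adjacent iff at Manhattan distance `1`. -/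
def gridGraph (n m : ℕ) : SimpleGraph (Fin n × Fin m) :=
  SimpleGraph.fromRel (fun a b => Nat.dist a.1.1 b.1.1 + Nat.dist a.2.1 b.2.1 = 1)

/-!
The grid is the box product of two paths. Distances add up in a box product, and the neighbours
of a vertex move one coordinate at a time, so a vertex is maximally distant from `x` exactly when
each coordinate is maximally distant from the corresponding coordinate of `x`. On a path, where
the distance is `|i - j|`, the only vertex maximally distant from one endpoint is the other one.
-/

namespace SimpleGraph

variable {α β : Type*} {G : SimpleGraph α} {H : SimpleGraph β}

lemma dist_boxProd {x y : α × β} (h₁ : G.Reachable x.1 y.1) (h₂ : H.Reachable x.2 y.2) :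
    (G □ H).dist x y = G.dist x.1 y.1 + H.dist x.2 y.2 := by
  rw [dist, edist_boxProd]
  exact ENat.toNat_add (edist_ne_top_iff_reachable.mpr h₁) (edist_ne_top_iff_reachable.mpr h₂)

theorem maxDistantFrom_boxProd_iff (hG : G.Preconnected) (hH : H.Preconnected)
    {x y : α × β} :
    MaxDistantFrom (G □ H) y x ↔ MaxDistantFrom G y.1 x.1 ∧ MaxDistantFrom H y.2 x.2 := by
  have hdist : ∀ z w : α × β, (G □ H).dist z w = G.dist z.1 w.1 + H.dist z.2 w.2 :=
    fun z w => dist_boxProd (hG _ _) (hH _ _)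
  simp only [MaxDistantFrom, hdist]
  constructor
  · intro h
    refine ⟨fun a ha => ?_, fun b hb => ?_⟩
    · exact Nat.le_of_add_le_add_right (h (a, y.2) (boxProd_adj.mpr (Or.inl ⟨ha, rfl⟩)))
    · exact Nat.le_of_add_le_add_left (h (y.1, b) (boxProd_adj.mpr (Or.inr ⟨hb, rfl⟩)))
  · rintro ⟨hy₁, hy₂⟩ z (⟨hadj, h₂⟩ | ⟨hadj, h₁⟩)
    · rw [← h₂]
      exact Nat.add_le_add_right (hy₁ _ hadj) _
    · rw [← h₁]
      exact Nat.add_le_add_left (hy₂ _ hadj) _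

variable {n : ℕ}

lemma Walk.natDist_le_length_pathGraph {u v : Fin n} (p : (pathGraph n).Walk u v) :
    Nat.dist u v ≤ p.length := by
  induction p with
  | nil => simp
  | cons h _ ih =>
    have := pathGraph_adj.mp h
    simp only [Walk.length_cons, Nat.dist] at ih ⊢
    omega

theorem pathGraph_dist (u v : Fin n) : (pathGraph n).dist u v = Nat.dist u v := by
  refine le_antisymm ?_ ?_
  · wlog huv : u ≤ v generalizing u v
    · rw [dist_comm, Nat.dist_comm]
      exact this v u (le_of_not_ge huv)
    obtain ⟨d, hd⟩ : ∃ d, v.val = u.val + d := ⟨v - u, by omega⟩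
    induction d generalizing u with
    | zero => simp [show u = v from Fin.ext (by omega)]
    | succ d ih =>
      let w : Fin n := ⟨u + 1, by omega⟩
      have huw : (pathGraph n).Adj u w := pathGraph_adj.mpr (Or.inl rfl)
      have hwv : (pathGraph n).dist w v ≤ Nat.dist w v :=
        ih w (Fin.le_def.mpr (by simp only [w]; omega)) (by simp only [w]; omega)
      calc (pathGraph n).dist u v ≤ (pathGraph n).dist u w + (pathGraph n).dist w v :=
            (pathGraph_preconnected n w v).dist_triangle_right u
        _ ≤ 1 + Nat.dist w v := add_le_add (dist_eq_one_iff_adj.mpr huw).le hwv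
        _ = Nat.dist u v := by simp only [Nat.dist, w]; omega
  · obtain ⟨p, hp⟩ := (pathGraph_preconnected n u v).exists_walk_length_eq_dist
    exact hp ▸ p.natDist_le_length_pathGraph

theorem maxDistantFrom_pathGraph_iff {k y : Fin n} (hk : k.val = 0 ∨ k.val = n - 1) :
    MaxDistantFrom (pathGraph n) y k ↔ y.val = n - 1 - k.val := by
  simp only [MaxDistantFrom, pathGraph_dist, pathGraph_adj]
  constructor
  · intro h
    by_contra hne
    rcases hk with hk | hk
    · have := h ⟨y + 1, by omega⟩ (Or.inl rfl)
      simp only [Nat.dist] at this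
      omega
    · have := h ⟨y - 1, by omega⟩ (Or.inr (by simp only; omega))
      simp only [Nat.dist] at this
      omega
  · intro hy z hz
    simp only [Nat.dist]
    omega

end SimpleGraph

theorem gridGraph_eq_boxProd (n m : ℕ) : gridGraph n m = pathGraph n □ pathGraph m := by
  ext a b
  simp only [gridGraph, fromRel_adj, boxProd_adj, pathGraph_adj, Nat.dist, ne_eq,
    Prod.ext_iff, Fin.ext_iff]
  omega

/-- In the `n × m` grid (`n, m ≥ 2`), the unique vertex maximally distant from a corner
vertex is the opposite corner. -/
theorem grid_maxDistant_from_corner {n m : ℕ}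
    (x : Fin n × Fin m)
    (hx1 : x.1.1 = 0 ∨ x.1.1 = n - 1) (hx2 : x.2.1 = 0 ∨ x.2.1 = m - 1) :
    {y | MaxDistantFrom (gridGraph n m) y x} =
      {(⟨n - 1 - x.1.1, by omega⟩, ⟨m - 1 - x.2.1, by omega⟩)} := by
  ext y
  rw [Set.mem_ofPred_eq, gridGraph_eq_boxProd,
    maxDistantFrom_boxProd_iff (pathGraph_preconnected n) (pathGraph_preconnected m),
    maxDistantFrom_pathGraph_iff hx1, maxDistantFrom_pathGraph_iff hx2,
    Set.mem_singleton_iff, Prod.ext_iff, Fin.ext_iff, Fin.ext_iff]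
end

section
/- For the cycle C_n with n odd, n ≥ 3, the set of vertices maximally distant from x_i is {x_j, x_{(j+1) mod n}} where j = (i + ⌊n/2⌋) mod n, and the strong resolving graph of C_n is again a cycle on n vertices. -/
open SimpleGraph

/-- The cycle with vertices `0, …, n-1` and edges between consecutive vertices mod `n`. -/
def cycGraph (n : ℕ) : SimpleGraph (ZMod n) :=
  SimpleGraph.fromRel (fun a b => b = a + 1)

/-!
The distance in the cycle on `ZMod n` is the cyclic norm `‖t‖ = |t.valMinAbs|` of the difference:
every edge changes the difference by `±1`, and `‖·‖` is subadditive with `‖±1‖ ≤ 1`. Below its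
maximum `c = ⌊n/2⌋` the norm grows strictly in one of the two directions, so `y` is maximally
distant from `x` exactly when `‖x - y‖ = c`, i.e. `y = x ± c`. This relation is symmetric, so the
strong resolving graph is the circulant graph with jump `c`. For odd `n` we have `2c + 1 = 0`, so
`c` is a unit (with inverse `-2`) and multiplication by `c` carries the cycle, the circulant graph
with jump `1`, onto it.
-/

namespace ZMod

variable {n : ℕ}

lemma natAbs_valMinAbs_add_le_add (a b : ZMod n) :
    (a + b).valMinAbs.natAbs ≤ a.valMinAbs.natAbs + b.valMinAbs.natAbs :=
  (natAbs_valMinAbs_add_le a b).trans (Int.natAbs_add_le _ _)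

lemma natAbs_valMinAbs_intCast_le (k : ℤ) : (k : ZMod n).valMinAbs.natAbs ≤ k.natAbs := by
  rcases eq_zero_or_neZero n with rfl | _
  · rfl
  · exact natAbs_min_of_le_div_two n _ _ (by rw [coe_valMinAbs]) (natAbs_valMinAbs_le _)

lemma natAbs_valMinAbs_intCast [NeZero n] {k : ℤ} (hk : k.natAbs ≤ n / 2) :
    (k : ZMod n).valMinAbs.natAbs = k.natAbs :=
  (natAbs_valMinAbs_intCast_le k).antisymm
    (natAbs_min_of_le_div_two n _ _ (coe_valMinAbs _).symm hk)

lemma natAbs_valMinAbs_one_le : (1 : ZMod n).valMinAbs.natAbs ≤ 1 := by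
  simpa using natAbs_valMinAbs_intCast_le (n := n) 1

lemma natAbs_valMinAbs_add_one_or_sub_one [NeZero n] {t : ZMod n}
    (ht : t.valMinAbs.natAbs < n / 2) :
    (t + 1).valMinAbs.natAbs = t.valMinAbs.natAbs + 1 ∨
      (t - 1).valMinAbs.natAbs = t.valMinAbs.natAbs + 1 := by
  have hadd := natAbs_valMinAbs_intCast (n := n) (k := t.valMinAbs + 1) (by omega)
  have hsub := natAbs_valMinAbs_intCast (n := n) (k := t.valMinAbs - 1) (by omega)
  push_cast [coe_valMinAbs] at hadd hsub
  omega

lemma natAbs_valMinAbs_eq_half_iff [NeZero n] {t : ZMod n} :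
    t.valMinAbs.natAbs = n / 2 ↔ t = (n / 2 : ℕ) ∨ t = -(n / 2 : ℕ) := by
  rw [← natAbs_valMinAbs_eq_natAbs_valMinAbs, valMinAbs_natCast_of_le_half le_rfl,
    Int.natAbs_natCast]

lemma two_mul_natCast_half_add_one_of_odd (hodd : Odd n) :
    2 * ((n / 2 : ℕ) : ZMod n) + 1 = 0 := by
  exact_mod_cast (congrArg (Nat.cast : ℕ → ZMod n) (Nat.two_mul_div_two_add_one_of_odd hodd)).trans
    (natCast_self n)

end ZMod

open ZMod

def SimpleGraph.circulantGraphIsoOfAddEquiv {G H : Type*} [AddGroup G] [AddGroup H] (φ : G ≃+ H)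
    (s : Set G) : circulantGraph s ≃g circulantGraph (φ '' s) where
  toEquiv := φ.toEquiv
  map_rel_iff' {a b} := by
    simp [← map_sub, φ.injective.eq_iff]

section CycGraph

variable {n : ℕ}

lemma cycGraph_adj {a b : ZMod n} :
    (cycGraph n).Adj a b ↔ a ≠ b ∧ (b = a + 1 ∨ a = b + 1) := by
  simp [cycGraph]

lemma cycGraph_eq_circulantGraph : cycGraph n = circulantGraph {1} := by
  ext a b
  simp [cycGraph_adj, sub_eq_iff_eq_add', or_comm]

lemma cycGraph_adj_add_one [Nontrivial (ZMod n)] (a : ZMod n) : (cycGraph n).Adj a (a + 1) :=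
  cycGraph_adj.2 ⟨by simp, Or.inl rfl⟩

lemma cycGraph_adj_sub_one [Nontrivial (ZMod n)] (a : ZMod n) : (cycGraph n).Adj a (a - 1) := by
  have h := (cycGraph_adj_add_one (a - 1)).symm
  rwa [sub_add_cancel] at h

lemma cycGraph_natAbs_valMinAbs_sub_le_length {a b : ZMod n} (w : (cycGraph n).Walk a b) :
    (b - a).valMinAbs.natAbs ≤ w.length := by
  induction w with
  | nil => simp
  | @cons a c b hac w ih =>
    have hstep : (c - a).valMinAbs.natAbs ≤ 1 := by
      rcases (cycGraph_adj.1 hac).2 with rfl | rfl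
      · simpa using natAbs_valMinAbs_one_le
      · simpa using natAbs_valMinAbs_one_le
    calc (b - a).valMinAbs.natAbs = ((b - c) + (c - a)).valMinAbs.natAbs := by
          rw [sub_add_sub_cancel]
      _ ≤ (b - c).valMinAbs.natAbs + (c - a).valMinAbs.natAbs := natAbs_valMinAbs_add_le_add _ _
      _ ≤ (Walk.cons hac w).length := by rw [Walk.length_cons]; omega

lemma cycGraph_exists_walk_add_natCast [Nontrivial (ZMod n)] (a : ZMod n) (m : ℕ) :
    ∃ w : (cycGraph n).Walk a (a + m), w.length = m := by
  induction m with
  | zero => exact ⟨SimpleGraph.Walk.nil.copy rfl (by simp), by simp⟩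
  | succ m ih =>
    obtain ⟨w, hw⟩ := ih
    exact ⟨(w.concat (cycGraph_adj_add_one _)).copy rfl (by push_cast; ring), by simp [hw]⟩

lemma cycGraph_exists_walk_add_intCast [Nontrivial (ZMod n)] (a : ZMod n) (k : ℤ) :
    ∃ w : (cycGraph n).Walk a (a + k), w.length = k.natAbs := by
  obtain ⟨m, rfl | rfl⟩ := Int.eq_nat_or_neg k
  · rw [Int.cast_natCast, Int.natAbs_natCast]
    exact cycGraph_exists_walk_add_natCast a m
  · obtain ⟨w, hw⟩ := cycGraph_exists_walk_add_natCast (a - (m : ZMod n)) m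
    exact ⟨w.reverse.copy (by ring) (by simp [sub_eq_add_neg]), by simp [hw]⟩

theorem cycGraph_dist [Nontrivial (ZMod n)] (a b : ZMod n) :
    (cycGraph n).dist a b = (b - a).valMinAbs.natAbs := by
  obtain ⟨w, hw⟩ := cycGraph_exists_walk_add_intCast a (b - a).valMinAbs
  have hb : a + ((b - a).valMinAbs : ZMod n) = b := by rw [coe_valMinAbs, add_sub_cancel]
  refine le_antisymm ?_ ?_
  · simpa [hw] using dist_le (w.copy rfl hb)
  · obtain ⟨v, hv⟩ := Reachable.exists_walk_length_eq_dist ⟨w.copy rfl hb⟩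
    exact hv ▸ cycGraph_natAbs_valMinAbs_sub_le_length v

theorem maxDistantFrom_cycGraph_iff [NeZero n] [Nontrivial (ZMod n)] {x y : ZMod n} :
    MaxDistantFrom (cycGraph n) y x ↔ (x - y).valMinAbs.natAbs = n / 2 := by
  simp only [MaxDistantFrom, cycGraph_dist]
  constructor
  · intro h
    by_contra hne
    have hlt := lt_of_le_of_ne (natAbs_valMinAbs_le _) hne
    have h1 := h _ (cycGraph_adj_sub_one y)
    have h2 := h _ (cycGraph_adj_add_one y)
    rw [show x - (y - 1) = x - y + 1 by ring] at h1
    rw [show x - (y + 1) = x - y - 1 by ring] at h2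
    rcases natAbs_valMinAbs_add_one_or_sub_one hlt with h3 | h3 <;> omega
  · intro h z _
    rw [h]
    exact natAbs_valMinAbs_le _

lemma maxDistantFrom_cycGraph_comm [NeZero n] [Nontrivial (ZMod n)] {x y : ZMod n} :
    MaxDistantFrom (cycGraph n) y x ↔ MaxDistantFrom (cycGraph n) x y := by
  rw [maxDistantFrom_cycGraph_iff, maxDistantFrom_cycGraph_iff, ← natAbs_valMinAbs_neg, neg_sub]

theorem srGraph_cycGraph [Fact (1 < n)] :
    srGraph (cycGraph n) = circulantGraph {((n / 2 : ℕ) : ZMod n)} := by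
  ext u v
  simp only [srGraph, MutuallyMaxDistant, circulantGraph_adj, Set.mem_singleton_iff]
  have hneg : v - u = -((n / 2 : ℕ) : ZMod n) ↔ u - v = (n / 2 : ℕ) := by rw [← neg_sub, neg_inj]
  rw [maxDistantFrom_cycGraph_comm (x := u), and_self, maxDistantFrom_cycGraph_iff,
    natAbs_valMinAbs_eq_half_iff, hneg, or_comm]

theorem setOf_maxDistantFrom_cycGraph_of_odd [Fact (1 < n)] (hodd : Odd n) (x : ZMod n) :
    {y | MaxDistantFrom (cycGraph n) y x} =
      {x + ((n / 2 : ℕ) : ZMod n), x + ((n / 2 : ℕ) : ZMod n) + 1} := by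
  have h := two_mul_natCast_half_add_one_of_odd hodd
  ext y
  simp only [Set.mem_ofPred_eq, Set.mem_insert_iff, Set.mem_singleton_iff,
    maxDistantFrom_cycGraph_iff, natAbs_valMinAbs_eq_half_iff]
  rw [or_comm]
  apply or_congr <;> constructor <;> intro hy
  · linear_combination -hy
  · linear_combination -hy
  · linear_combination -hy - h
  · linear_combination -hy - h

theorem nonempty_srGraph_cycGraph_iso_of_odd [Fact (1 < n)] (hodd : Odd n) :
    Nonempty (srGraph (cycGraph n) ≃g cycGraph n) := by
  have h := two_mul_natCast_half_add_one_of_odd hodd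
  let u : (ZMod n)ˣ := Units.mkOfMulEqOne _ (-2) (by linear_combination -h)
  have e := circulantGraphIsoOfAddEquiv (AddAut.mulRight u) {1}
  rw [Set.image_singleton, AddAut.mulRight_apply, one_mul] at e
  rw [srGraph_cycGraph, cycGraph_eq_circulantGraph]
  exact ⟨e.symm⟩

end CycGraph

/-- For odd `n ≥ 3`, the set of vertices maximally distant from `x` in the cycle `C n`
consists of the two vertices `x + ⌊n/2⌋` and `x + ⌊n/2⌋ + 1`, and the strong resolving
graph of `C n` is again a cycle on `n` vertices. -/
theorem cycle_odd_srGraph {n : ℕ} (hn : 3 ≤ n) (hodd : Odd n) :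
    (∀ x : ZMod n, {y | MaxDistantFrom (cycGraph n) y x} =
      {x + ((n / 2 : ℕ) : ZMod n), x + ((n / 2 : ℕ) : ZMod n) + 1}) ∧
    Nonempty (srGraph (cycGraph n) ≃g cycGraph n) := by
  have : Fact (1 < n) := ⟨by omega⟩
  exact ⟨setOf_maxDistantFrom_cycGraph_of_odd hodd, nonempty_srGraph_cycGraph_iso_of_odd hodd⟩
end

section
/- In a connected cograph G, two distinct vertices u and v are mutually maximally distant if and only if u and v are non-adjacent or u and v are true twins (N_G[u] = N_G[v]). -/
open SimpleGraph

/-- A cograph: a graph with no induced path on four vertices. -/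
def IsCograph {V : Type*} (G : SimpleGraph V) : Prop :=
  IsEmpty (SimpleGraph.pathGraph 4 ↪g G)

/-!
Along a shortest walk the `i`-th vertex is at distance exactly `i` from the start, and adjacent
vertices have distances differing by at most one, so the first four vertices of a shortest walk
of length at least `3` induce a `P₄`; hence all distances in a cograph are at most `2`.
For non-adjacent `u ≠ v` the distance `2` is then the largest one, which makes `u` and `v`
mutually maximally distant. For adjacent `u, v`, in any graph, `u` is maximally distant from `v`
exactly when `N(u) ⊆ N[v]`, so mutual maximal distance means `N[u] = N[v]`.
-/

namespace SimpleGraph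

variable {V : Type*} {G : SimpleGraph V}

lemma Reachable.dist_le_one_iff {u v : V} (h : G.Reachable u v) :
    G.dist u v ≤ 1 ↔ u = v ∨ G.Adj u v := by
  rw [Nat.le_one_iff_eq_zero_or_eq_one, h.dist_eq_zero_iff, dist_eq_one_iff_adj]

lemma Walk.dist_getVert_of_length_eq_dist {u v : V} {p : G.Walk u v}
    (hp : p.length = G.dist u v) {i : ℕ} (hi : i ≤ p.length) :
    G.dist u (p.getVert i) = i := by
  have hle : G.dist u (p.getVert i) ≤ i := by
    simpa [hi] using dist_le (p.take i)
  have hge : G.dist u v ≤ G.dist u (p.getVert i) + (p.length - i) :=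
    ((p.take i).reachable.dist_triangle_left v).trans
      (Nat.add_le_add_left (by simpa using dist_le (p.drop i)) _)
  omega

def Walk.pathGraphEmbeddingOfLengthEqDist {u v : V} (p : G.Walk u v)
    (hp : p.length = G.dist u v) (n : ℕ) (hn : n ≤ p.length + 1) : pathGraph n ↪g G where
  toFun i := p.getVert i
  inj' i j hij := Fin.ext <| by
    rw [← p.dist_getVert_of_length_eq_dist hp (i := i) (by omega),
      ← p.dist_getVert_of_length_eq_dist hp (i := j) (by omega)]
    exact congrArg (G.dist u) hij
  map_rel_iff' {i j} := by
    have hi := p.dist_getVert_of_length_eq_dist hp (i := i) (by omega)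
    have hj := p.dist_getVert_of_length_eq_dist hp (i := j) (by omega)
    change G.Adj (p.getVert i) (p.getVert j) ↔ _
    rw [pathGraph_adj]
    constructor
    · intro hadj
      have hne : (i : ℕ) ≠ j := fun h => hadj.ne (by rw [Fin.ext h])
      rcases hadj.diff_dist_adj (u := u) with h | h | h <;> omega
    · rintro (h | h)
      · rw [← h]; exact p.adj_getVert_succ (by omega)
      · rw [← h]; exact (p.adj_getVert_succ (by omega)).symm

end SimpleGraph

open SimpleGraph

lemma IsCograph.dist_le_two {V : Type*} {G : SimpleGraph V} (hco : IsCograph G) (x y : V) :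
    G.dist x y ≤ 2 := by
  by_contra! h
  obtain ⟨p, hp⟩ := exists_walk_of_dist_ne_zero (G := G) (u := x) (v := y) (by omega)
  exact hco.false (p.pathGraphEmbeddingOfLengthEqDist hp 4 (by omega))

section MaxDistant

variable {V : Type*} {G : SimpleGraph V} {u v : V}

lemma mutuallyMaxDistant_of_forall_dist_le (h : ∀ x y, G.dist x y ≤ G.dist u v) :
    MutuallyMaxDistant G u v :=
  ⟨fun z _ => h z v, fun z _ => G.dist_comm (u := v) ▸ h z u⟩

lemma maxDistantFrom_iff_of_adj (h : G.Adj u v) :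
    MaxDistantFrom G u v ↔ ∀ w, G.Adj u w → w = v ∨ G.Adj v w := by
  refine forall₂_congr fun w huw => ?_
  rw [dist_eq_one_iff_adj.mpr h, (huw.symm.reachable.trans h.reachable).dist_le_one_iff,
    G.adj_comm w]

lemma mutuallyMaxDistant_iff_of_adj (h : G.Adj u v) :
    MutuallyMaxDistant G u v ↔ ∀ w, (w = u ∨ G.Adj u w) ↔ (w = v ∨ G.Adj v w) := by
  rw [MutuallyMaxDistant, maxDistantFrom_iff_of_adj h, maxDistantFrom_iff_of_adj h.symm]
  constructor
  · rintro ⟨hu, hv⟩ w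
    constructor
    · rintro (rfl | huw)
      exacts [Or.inr h.symm, hu w huw]
    · rintro (rfl | hvw)
      exacts [Or.inr h, hv w hvw]
  · intro hw
    exact ⟨fun w huw => (hw w).mp (Or.inr huw), fun w hvw => (hw w).mpr (Or.inr hvw)⟩

end MaxDistant

theorem cograph_mmd_iff_general {V : Type*} (G : SimpleGraph V)
    (hG : G.Connected) (hco : IsCograph G) (u v : V) (huv : u ≠ v) :
    MutuallyMaxDistant G u v ↔
      (¬ G.Adj u v ∨ (G.Adj u v ∧ ∀ w : V, (w = u ∨ G.Adj u w) ↔ (w = v ∨ G.Adj v w))) := by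
  by_cases hadj : G.Adj u v
  · simpa [hadj] using mutuallyMaxDistant_iff_of_adj hadj
  · have hmax : ∀ x y, G.dist x y ≤ G.dist u v := fun x y =>
      (hco.dist_le_two x y).trans (hG.one_lt_dist_of_ne_of_not_adj huv hadj)
    simpa [hadj] using mutuallyMaxDistant_of_forall_dist_le hmax

/-- In a connected cograph, two distinct vertices are mutually maximally distant iff
they are non-adjacent or true twins. -/
theorem cograph_mmd_iff {V : Type*} [Fintype V] (G : SimpleGraph V)
    (hG : G.Connected) (hco : IsCograph G) (u v : V) (huv : u ≠ v) :
    MutuallyMaxDistant G u v ↔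
      (¬ G.Adj u v ∨ (G.Adj u v ∧ ∀ w : V, (w = u ∨ G.Adj u w) ↔ (w = v ∨ G.Adj v w))) :=
  cograph_mmd_iff_general G hG hco u v huv
end

section
/- Let G be a connected graph and R = {w_1,...,w_k} a strong resolving set of G. Then for all vertices u, v: d_G(u,v) = max over 1≤i≤k of |d_G(u,w_i) − d_G(v,w_i)|. -/
open SimpleGraph

theorem SimpleGraph.Connected.abs_dist_sub_dist_le {V : Type*} {G : SimpleGraph V}
    (hG : G.Connected) (u v w : V) :
    |(G.dist u w : ℤ) - G.dist v w| ≤ G.dist u v := by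
  have huw : G.dist u w ≤ G.dist u v + G.dist v w := hG.dist_triangle
  have hvw : G.dist v w ≤ G.dist v u + G.dist u w := hG.dist_triangle
  rw [dist_comm (u := v) (v := u)] at hvw
  rw [abs_sub_le_iff]
  constructor <;> omega

theorem StronglyResolves.dist_le_abs_dist_sub_dist {V : Type*} {G : SimpleGraph V} {w u v : V}
    (h : StronglyResolves G w u v) :
    (G.dist u v : ℤ) ≤ |(G.dist u w : ℤ) - G.dist v w| := by
  rw [StronglyResolves, dist_comm (u := w) (v := u), dist_comm (u := w) (v := v),
    dist_comm (u := v) (v := u)] at h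
  rw [le_abs]
  omega

theorem dist_eq_sup_abs_sub_general {V : Type*} (G : SimpleGraph V) (hG : G.Connected)
    (R : Finset V) (hR : R.Nonempty) (hsr : StrongResolvingSet G ↑R) (u v : V) :
    (G.dist u v : ℤ) =
      R.sup' hR (fun w => |(G.dist u w : ℤ) - (G.dist v w : ℤ)|) := by
  refine le_antisymm ?_ (Finset.sup'_le _ _ fun w _ => hG.abs_dist_sub_dist_le u v w)
  rcases eq_or_ne u v with rfl | huv
  · rw [dist_self, Nat.cast_zero]
    exact Finset.le_sup'_of_le _ hR.choose_spec (abs_nonneg _)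
  · obtain ⟨w, hwR, hw⟩ := hsr u v huv
    exact Finset.le_sup'_of_le _ hwR hw.dist_le_abs_dist_sub_dist

/-- If `R = {w_1, …, w_k}` is a strong resolving set of a connected graph `G`, then for
all vertices `u, v`: `d(u,v) = max_i |d(u,w_i) − d(v,w_i)|`. -/
theorem dist_eq_sup_abs_sub {V : Type*} [Fintype V] (G : SimpleGraph V) (hG : G.Connected)
    (R : Finset V) (hR : R.Nonempty) (hsr : StrongResolvingSet G ↑R) (u v : V) :
    (G.dist u v : ℤ) =
      R.sup' hR (fun w => |(G.dist u w : ℤ) - (G.dist v w : ℤ)|) :=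
  dist_eq_sup_abs_sub_general G hG R hR hsr u v
end
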